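/- Let G be an ample groupoid acting on a topological space X with a basic action, i.e. the map (g,x) ↦ (g·x, x) from G ×_{G⁰} X to X ×_{G\X} X is a homeomorphism. Then the action is free, and it is proper if and only if the orbit space G\X is Hausdorff. -/

import Mathlib

universe u v

open Function

/-- f is a compactly supported continuous ℤ-valued function on some open Hausdorff
subset U (extended by zero). -/
def IsCc {X : Type u} [TopologicalSpace X] (f : X → ℤ) : Prop :=
  ∃ U : Set X, IsOpen U ∧ T2Space U ∧ Continuous (fun x : U => f x) ∧
    IsCompact (support f) ∧ support f ⊆ U

/-- ℤ[X]: the span of the groups C_c(U, ℤ) over all open Hausdorff subsets U of X. -/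
def ZSpan (X : Type u) [TopologicalSpace X] : AddSubgroup (X → ℤ) :=
  AddSubgroup.closure {f | IsCc f}

/-- Elements of ℤ[X] supported in a subset S. -/
def ZSpanOn (X : Type u) [TopologicalSpace X] (S : Set X) : AddSubgroup (X → ℤ) where
  carrier := {f | f ∈ ZSpan X ∧ support f ⊆ S}
  add_mem' := by
    rintro f g ⟨hf, hf'⟩ ⟨hg, hg'⟩
    exact ⟨add_mem hf hg, subset_trans (support_add f g) (Set.union_subset hf' hg')⟩
  zero_mem' := ⟨zero_mem _, by simp⟩
  neg_mem' := by
    rintro f ⟨hf, hf'⟩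
    exact ⟨neg_mem hf, by rw [support_neg]; exact hf'⟩

/-- A locally locally-compact-Hausdorff space: every point has an open Hausdorff
locally compact neighbourhood. -/
def LocallyLCH (X : Type u) [TopologicalSpace X] : Prop :=
  ∀ x : X, ∃ U : Set X, IsOpen U ∧ x ∈ U ∧ T2Space U ∧ LocallyCompactSpace U

/-- An ample groupoid: an étale groupoid (possibly non-Hausdorff arrow space) whose
unit space is locally compact Hausdorff and totally disconnected.  Arrows g, h are
composable when s g = r h. -/
structure AmpleGroupoid (G : Type u) [TopologicalSpace G] where
  s : G → G
  r : G → G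
  inv : G → G
  mul : (g h : G) → s g = r h → G
  s_s : ∀ g, s (s g) = s g
  r_s : ∀ g, r (s g) = s g
  s_r : ∀ g, s (r g) = r g
  r_r : ∀ g, r (r g) = r g
  r_mul : ∀ g h hc, r (mul g h hc) = r g
  s_mul : ∀ g h hc, s (mul g h hc) = s h
  mul_assoc : ∀ g h k (hgh : s g = r h) (hhk : s h = r k),
    mul (mul g h hgh) k ((s_mul g h hgh).trans hhk)
      = mul g (mul h k hhk) (hgh.trans (r_mul h k hhk).symm)
  mul_unit : ∀ g, mul g (s g) (r_s g).symm = g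
  unit_mul : ∀ g, mul (r g) g (s_r g) = g
  s_inv : ∀ g, s (inv g) = r g
  r_inv : ∀ g, r (inv g) = s g
  mul_inv : ∀ g, mul g (inv g) (r_inv g).symm = r g
  inv_mul : ∀ g, mul (inv g) g (s_inv g) = s g
  continuous_inv : Continuous inv
  etale_s : IsLocalHomeomorph s
  etale_r : IsLocalHomeomorph r
  continuous_mul : Continuous (fun p : {p : G × G // s p.1 = r p.2} => mul p.1.1 p.1.2 p.2)
  t2_units : T2Space {x : G // s x = x}
  lch_units : LocallyCompactSpace {x : G // s x = x}
  td_units : TotallyDisconnectedSpace {x : G // s x = x}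

variable {G : Type u} [TopologicalSpace G]

/-- The unit space of the groupoid, as a subset of the arrows. -/
def AmpleGroupoid.units (𝒢 : AmpleGroupoid G) : Set G := {x : G | 𝒢.s x = x}

/-- Push-forward of ℤ-valued functions along a (local homeo) map, by summation
over fibres. -/
noncomputable def push {α : Type u} {β : Type v} (f : α → β) (ξ : α → ℤ) : β → ℤ :=
  fun y => ∑ᶠ x : {x : α // f x = y}, ξ x.1

/-- The formula for the left action of ℤ[G] on ℤ[W] for a left G-space W with anchor
ρ and action a:  (ξ · m)(w) = Σ_{g ∈ G_{ρ(w)}} ξ(g⁻¹) m(g·w). -/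
noncomputable def lactGen (𝒢 : AmpleGroupoid G) {W : Type v} (ρ : W → G)
    (a : (g : G) → (w : W) → 𝒢.s g = ρ w → W) (ξ : G → ℤ) (m : W → ℤ) : W → ℤ :=
  fun w => ∑ᶠ g : {g : G // 𝒢.s g = ρ w}, ξ (𝒢.inv g.1) * m (a g.1 w g.2)

/-- The formula for the right action of ℤ[G] on ℤ[W] for a right G-space W with anchor
σ and action a:  (m · ξ)(w) = Σ_{g ∈ G^{σ(w)}} m(w·g) ξ(g⁻¹). -/
noncomputable def ractGen (𝒢 : AmpleGroupoid G) {W : Type v} (σ : W → G)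
    (a : (w : W) → (g : G) → σ w = 𝒢.r g → W) (m : W → ℤ) (ξ : G → ℤ) : W → ℤ :=
  fun w => ∑ᶠ g : {g : G // σ w = 𝒢.r g}, m (a w g.1 g.2) * ξ (𝒢.inv g.1)

/-- Convolution on ℤ[G]: (ξ * η)(g) = Σ_{h ∈ G_{r(g)}} ξ(h⁻¹) η(h g). -/
noncomputable def conv (𝒢 : AmpleGroupoid G) (ξ η : G → ℤ) : G → ℤ :=
  lactGen 𝒢 𝒢.r (fun h g hc => 𝒢.mul h g hc) ξ η

/-- The right action of ℤ[G] on the trivial right module ℤ[G⁰]: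
(m · ξ)(u) = Σ_{g ∈ G^u} m(s g) ξ(g⁻¹). -/
noncomputable def ract0 (𝒢 : AmpleGroupoid G) (m ξ : G → ℤ) : G → ℤ :=
  ractGen 𝒢 id (fun _ g _ => 𝒢.s g) m ξ

/-- A continuous left action of an ample groupoid on a topological space, with
anchor map τ. -/
structure GAction {G : Type u} [TopologicalSpace G] (𝒢 : AmpleGroupoid G)
    (X : Type v) [TopologicalSpace X] where
  τ : X → G
  τ_unit : ∀ x, 𝒢.s (τ x) = τ x
  act : (g : G) → (x : X) → 𝒢.s g = τ x → X
  τ_act : ∀ g x h, τ (act g x h) = 𝒢.r g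
  act_unit : ∀ x, act (τ x) x (τ_unit x) = x
  act_mul : ∀ g h x (hgh : 𝒢.s g = 𝒢.r h) (hx : 𝒢.s h = τ x),
    act (𝒢.mul g h hgh) x ((𝒢.s_mul g h hgh).trans hx)
      = act g (act h x hx) (hgh.trans (τ_act h x hx).symm)
  continuous_τ : Continuous τ
  continuous_act :
    Continuous (fun p : {p : G × X // 𝒢.s p.1 = τ p.2} => act p.1.1 p.1.2 p.2)

/-- A continuous right action of an ample groupoid on a topological space, with
anchor map σ. -/
structure GRAction {G : Type u} [TopologicalSpace G] (𝒢 : AmpleGroupoid G)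
    (X : Type v) [TopologicalSpace X] where
  σ : X → G
  σ_unit : ∀ x, 𝒢.s (σ x) = σ x
  act : (x : X) → (g : G) → σ x = 𝒢.r g → X
  σ_act : ∀ x g h, σ (act x g h) = 𝒢.s g
  act_unit : ∀ x, act x (σ x) ((σ_unit x).symm.trans ((𝒢.r_s (σ x)).symm.trans (congrArg 𝒢.r (σ_unit x)))) = x
  act_mul : ∀ x g h (hx : σ x = 𝒢.r g) (hgh : 𝒢.s g = 𝒢.r h),
    act x (𝒢.mul g h hgh) (hx.trans (𝒢.r_mul g h hgh).symm)
      = act (act x g hx) h ((σ_act x g hx).trans hgh)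
  continuous_σ : Continuous σ
  continuous_act :
    Continuous (fun p : {p : X × G // σ p.1 = 𝒢.r p.2} => act p.1.1 p.1.2 p.2)

/-- The orbit equivalence relation of a left action.  -/
def GAction.orbitRel {G : Type u} [TopologicalSpace G] {𝒢 : AmpleGroupoid G}
    {X : Type v} [TopologicalSpace X] (A : GAction 𝒢 X) : X → X → Prop :=
  fun x y => ∃ g hx, A.act g x hx = y

/-- The orbit space G\X of a left action, with the quotient topology. -/
def GAction.orbitSpace {G : Type u} [TopologicalSpace G] {𝒢 : AmpleGroupoid G}
    {X : Type v} [TopologicalSpace X] (A : GAction 𝒢 X) : Type v :=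
  Quot A.orbitRel

instance {G : Type u} [TopologicalSpace G] {𝒢 : AmpleGroupoid G}
    {X : Type v} [TopologicalSpace X] (A : GAction 𝒢 X) :
    TopologicalSpace A.orbitSpace :=
  inferInstanceAs (TopologicalSpace (Quot A.orbitRel))

/-- The orbit equivalence relation of a right action. -/
def GRAction.orbitRel {G : Type u} [TopologicalSpace G] {𝒢 : AmpleGroupoid G}
    {X : Type v} [TopologicalSpace X] (A : GRAction 𝒢 X) : X → X → Prop :=
  fun x y => ∃ g hx, A.act x g hx = y

/-- The orbit space X/G of a right action, with the quotient topology. -/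
def GRAction.orbitSpace {G : Type u} [TopologicalSpace G] {𝒢 : AmpleGroupoid G}
    {X : Type v} [TopologicalSpace X] (A : GRAction 𝒢 X) : Type v :=
  Quot A.orbitRel

instance {G : Type u} [TopologicalSpace G] {𝒢 : AmpleGroupoid G}
    {X : Type v} [TopologicalSpace X] (A : GRAction 𝒢 X) :
    TopologicalSpace A.orbitSpace :=
  inferInstanceAs (TopologicalSpace (Quot A.orbitRel))

/-- The canonical map G ×_{G⁰} X → X ×_{G\X} X, (g,x) ↦ (g·x, x), for a left action;
the action is basic when this map is a homeomorphism. -/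
def GAction.basicMap {G : Type u} [TopologicalSpace G] {𝒢 : AmpleGroupoid G}
    {X : Type v} [TopologicalSpace X] (A : GAction 𝒢 X) :
    {p : G × X // 𝒢.s p.1 = A.τ p.2} →
      {q : X × X // Quot.mk A.orbitRel q.1 = Quot.mk A.orbitRel q.2} :=
  fun p => ⟨(A.act p.1.1 p.1.2 p.2, p.1.2),
    (Quot.sound ⟨p.1.1, p.2, rfl⟩).symm⟩

/-- Basic left action. -/
def GAction.IsBasic {G : Type u} [TopologicalSpace G] {𝒢 : AmpleGroupoid G}
    {X : Type v} [TopologicalSpace X] (A : GAction 𝒢 X) : Prop :=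
  IsHomeomorph A.basicMap

/-- The canonical map X ×_{G⁰} G → X ×_{X/G} X, (x,g) ↦ (x, x·g), for a right action;
the action is basic when this map is a homeomorphism. -/
def GRAction.basicMap {G : Type u} [TopologicalSpace G] {𝒢 : AmpleGroupoid G}
    {X : Type v} [TopologicalSpace X] (A : GRAction 𝒢 X) :
    {p : X × G // A.σ p.1 = 𝒢.r p.2} →
      {q : X × X // Quot.mk A.orbitRel q.1 = Quot.mk A.orbitRel q.2} :=
  fun p => ⟨(p.1.1, A.act p.1.1 p.1.2 p.2), Quot.sound ⟨p.1.2, p.2, rfl⟩⟩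

/-- Basic right action. -/
def GRAction.IsBasic {G : Type u} [TopologicalSpace G] {𝒢 : AmpleGroupoid G}
    {X : Type v} [TopologicalSpace X] (A : GRAction 𝒢 X) : Prop :=
  IsHomeomorph A.basicMap

/-- Étale right action: the anchor map is a local homeomorphism. -/
def GRAction.IsEtale {G : Type u} [TopologicalSpace G] {𝒢 : AmpleGroupoid G}
    {X : Type v} [TopologicalSpace X] (A : GRAction 𝒢 X) : Prop :=
  IsLocalHomeomorph A.σ

section Aux

variable {𝒢 : AmpleGroupoid G} {X : Type v} [TopologicalSpace X] (A : GAction 𝒢 X)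

lemma GAction.act_congr {g g' : G} {x : X} (hg : g = g') {h : 𝒢.s g = A.τ x}
    {h' : 𝒢.s g' = A.τ x} : A.act g x h = A.act g' x h' := by subst hg; rfl

lemma GAction.orbit_equivalence : Equivalence A.orbitRel := by
  refine ⟨fun x => ⟨A.τ x, A.τ_unit x, A.act_unit x⟩, ?_, ?_⟩
  · rintro x y ⟨g, hx, rfl⟩
    refine ⟨𝒢.inv g, (𝒢.s_inv g).trans (A.τ_act g x hx).symm, ?_⟩
    calc A.act (𝒢.inv g) (A.act g x hx) ((𝒢.s_inv g).trans (A.τ_act g x hx).symm)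
        = A.act (𝒢.mul (𝒢.inv g) g (𝒢.s_inv g)) x ((𝒢.s_mul _ _ _).trans hx) :=
          (A.act_mul (𝒢.inv g) g x (𝒢.s_inv g) hx).symm
      _ = A.act (A.τ x) x (A.τ_unit x) := A.act_congr ((𝒢.inv_mul g).trans hx)
      _ = x := A.act_unit x
  · rintro x y z ⟨g, hx, rfl⟩ ⟨h, hy, rfl⟩
    exact ⟨𝒢.mul h g (hy.trans (A.τ_act g x hx)), (𝒢.s_mul h g _).trans hx,
      A.act_mul h g x (hy.trans (A.τ_act g x hx)) hx⟩

lemma GAction.quot_eq_iff (a b : X) :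
    Quot.mk A.orbitRel a = Quot.mk A.orbitRel b ↔ A.orbitRel a b := by
  rw [Quot.eq]
  exact (A.orbit_equivalence).eqvGen_iff

/-- The second projection from the fibre product G ×_{G⁰} X is an open map, because
the source map of the groupoid is étale. -/
lemma GAction.pr2_isOpenMap :
    IsOpenMap (fun p : {p : G × X // 𝒢.s p.1 = A.τ p.2} => p.1.2) := by
  intro W hW
  rw [isOpen_iff_forall_mem_open]
  rintro y ⟨⟨⟨g, x⟩, hg⟩, hpW, rfl⟩
  obtain ⟨e, hge, hse⟩ := 𝒢.etale_s g
  obtain ⟨W', hW', hWW'⟩ := isOpen_induced_iff.mp hW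
  have hgxW' : (g, x) ∈ W' := by
    have : (⟨(g, x), hg⟩ : {p : G × X // 𝒢.s p.1 = A.τ p.2}) ∈ Subtype.val ⁻¹' W' := by
      rw [hWW']; exact hpW
    exact this
  obtain ⟨V, O, hV, hO, hgV, hxO, hVO⟩ := isOpen_prod_iff.mp hW' g x hgxW'
  set V' := V ∩ e.source with hV'def
  have hV' : IsOpen V' := hV.inter e.open_source
  have heV' : IsOpen (e '' V') := e.isOpen_image_of_subset_source hV' Set.inter_subset_right
  refine ⟨O ∩ A.τ ⁻¹' (e '' V'), ?_, hO.inter (heV'.preimage A.continuous_τ), ?_⟩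
  · rintro z ⟨hzO, hzτ⟩
    obtain ⟨v, hvV', hvz⟩ := hzτ
    have hsv : 𝒢.s v = A.τ z := by rw [hse]; exact hvz
    refine ⟨⟨(v, z), hsv⟩, ?_, rfl⟩
    have : (v, z) ∈ W' := hVO (Set.mk_mem_prod hvV'.1 hzO)
    rw [← hWW']; exact this
  · refine ⟨hxO, ⟨g, ⟨hgV, hge⟩, ?_⟩⟩
    rw [← hse]; exact hg

/-- The orbit map is open. -/
lemma GAction.quot_mk_isOpenMap : IsOpenMap (Quot.mk A.orbitRel) := by
  intro U hU
  rw [← isQuotientMap_quot_mk.isOpen_preimage]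
  have key : Quot.mk A.orbitRel ⁻¹' (Quot.mk A.orbitRel '' U) =
      (fun p : {p : G × X // 𝒢.s p.1 = A.τ p.2} => p.1.2) ''
        ((fun p : {p : G × X // 𝒢.s p.1 = A.τ p.2} => A.act p.1.1 p.1.2 p.2) ⁻¹' U) := by
    ext x
    simp only [Set.mem_preimage, Set.mem_image]
    constructor
    · rintro ⟨u, huU, hq⟩
      obtain ⟨g, hx, hgx⟩ := (A.quot_eq_iff x u).mp hq.symm
      exact ⟨⟨(g, x), hx⟩, by simpa [hgx] using huU, rfl⟩
    · rintro ⟨⟨⟨g, y⟩, hgy⟩, hU', rfl⟩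
      exact ⟨A.act g y hgy, hU', (Quot.sound ⟨g, hgy, rfl⟩).symm⟩
  rw [key]
  exact A.pr2_isOpenMap _
    (hU.preimage (by exact A.continuous_act))

/-- If the orbit relation is closed in X × X then the orbit space is Hausdorff
(using openness of the orbit map). -/
lemma GAction.t2_of_closedRel
    (hR : IsClosed {q : X × X | Quot.mk A.orbitRel q.1 = Quot.mk A.orbitRel q.2}) :
    T2Space A.orbitSpace := by
  constructor
  intro a b hab
  induction a using Quot.ind with | _ x => ?_
  induction b using Quot.ind with | _ y => ?_
  have hxy : (x, y) ∈ {q : X × X | Quot.mk A.orbitRel q.1 = Quot.mk A.orbitRel q.2}ᶜ := hab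
  obtain ⟨U, V, hU, hV, hxU, hyV, hUV⟩ := isOpen_prod_iff.mp hR.isOpen_compl x y hxy
  refine ⟨Quot.mk A.orbitRel '' U, Quot.mk A.orbitRel '' V,
    A.quot_mk_isOpenMap U hU, A.quot_mk_isOpenMap V hV,
    ⟨x, hxU, rfl⟩, ⟨y, hyV, rfl⟩, ?_⟩
  rw [Set.disjoint_left]
  rintro q ⟨u, huU, rfl⟩ ⟨v, hvV, hq⟩
  exact hUV (Set.mk_mem_prod huU hvV) hq.symm

lemma GAction.range_eq (hbasic : A.IsBasic) :
    Set.range (fun p : {p : G × X // 𝒢.s p.1 = A.τ p.2} =>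
        ((A.act p.1.1 p.1.2 p.2, p.1.2) : X × X)) =
      {q : X × X | Quot.mk A.orbitRel q.1 = Quot.mk A.orbitRel q.2} := by
  ext q
  constructor
  · rintro ⟨p, rfl⟩
    exact (Quot.sound ⟨p.1.1, p.2, rfl⟩).symm
  · intro hq
    obtain ⟨p, hp⟩ := hbasic.surjective ⟨q, hq⟩
    exact ⟨p, congrArg Subtype.val hp⟩

end Aux

/-- a basic action of an ample groupoid is free, and it is proper if
and only if the orbit space is Hausdorff. -/
theorem stmt_8 (G : Type u) [TopologicalSpace G] (𝒢 : AmpleGroupoid G)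
    (X : Type v) [TopologicalSpace X] (A : GAction 𝒢 X) (hbasic : A.IsBasic) :
    (∀ g x hx, A.act g x hx = x → 𝒢.s g = g) ∧
      (IsProperMap (fun p : {p : G × X // 𝒢.s p.1 = A.τ p.2} =>
          ((A.act p.1.1 p.1.2 p.2, p.1.2) : X × X))
        ↔ T2Space A.orbitSpace) := by
  constructor
  · -- freeness
    intro g x hx hgx
    have h1 : A.basicMap ⟨(g, x), hx⟩ = A.basicMap ⟨(A.τ x, x), A.τ_unit x⟩ := by
      apply Subtype.ext
      show (A.act g x hx, x) = (A.act (A.τ x) x (A.τ_unit x), x)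
      rw [hgx, A.act_unit]
    have h2 := hbasic.injective h1
    have h3 : g = A.τ x :=
      congrArg (fun p : {p : G × X // 𝒢.s p.1 = A.τ p.2} => p.1.1) h2
    rw [h3]
    exact A.τ_unit x
  · constructor
    · intro hp
      apply A.t2_of_closedRel
      have := hp.isClosed_range
      rwa [A.range_eq hbasic] at this
    · intro ht
      have hcl : IsClosed {q : X × X | Quot.mk A.orbitRel q.1 = Quot.mk A.orbitRel q.2} := by
        have hc : Continuous (fun q : X × X =>
            ((Quot.mk A.orbitRel q.1, Quot.mk A.orbitRel q.2) :
              A.orbitSpace × A.orbitSpace)) :=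
          ((continuous_quot_mk).comp continuous_fst).prodMk
            ((continuous_quot_mk).comp continuous_snd)
        exact isClosed_diagonal.preimage hc
      have h1 : IsProperMap (Subtype.val :
          {q : X × X // Quot.mk A.orbitRel q.1 = Quot.mk A.orbitRel q.2} → X × X) :=
        hcl.isProperMap_subtypeVal
      have h2 : IsProperMap A.basicMap := hbasic.isProperMap
      exact h1.comp h2
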